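/- arXiv:math/0404353 — 3 statements merged into one kernel-verified Lean document; each statement's English description precedes it below -/
import Mathlib

section
/- Let η_1, η_2 be compositions and γ_1 ∈ ℤ^{|η_1|}, γ_2 ∈ ℤ^{|η_2|}, each summing to zero. Then the parabolic q-Kostant partition function is multiplicative under concatenation: K_{Φ(η_1 * η_2)}(γ_1 * γ_2 | q) = K_{Φ(η_1)}(γ_1 | q) · K_{Φ(η_2)}(γ_2 | q), where * denotes concatenation. -/
open scoped Classical

noncomputable section

/-- Partial sum `S η r = η_1 + ⋯ + η_r`. -/
def S (η : List ℕ) (r : ℕ) : ℕ := (η.take r).sum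

/-- The set `Φ(η)` of pairs (0-indexed) `(i,j)` with `i < S η r ≤ j` for some `1 ≤ r ≤ l(η)`. -/
def Phi (η : List ℕ) : Finset (ℕ × ℕ) :=
  (Finset.range η.sum ×ˢ Finset.range η.sum).filter
    (fun p => ∃ r ∈ Finset.Icc 1 η.length, p.1 < S η r ∧ S η r ≤ p.2)

/-- Coefficient of `q^d` in the parabolic `q`-Kostant partition function `K_{Φ(η)}(γ|q)`:
the number of non-negative integer arrays supported on `Φ(η)` with net row sums `γ`
and total sum of entries `d`. -/
def KCoeff (η : List ℕ) (γ : ℕ → ℤ) (d : ℕ) : ℕ :=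
  Nat.card {m : ℕ × ℕ → ℕ //
    (∀ p, p ∉ Phi η → m p = 0) ∧
    (∀ i ∈ Finset.range η.sum,
      (∑ j ∈ Finset.range η.sum, (m (i, j) : ℤ)) -
        (∑ j ∈ Finset.range η.sum, (m (j, i) : ℤ)) = γ i) ∧
    (∑ p ∈ Phi η, m p) = d}

/-- The parabolic Kostant partition function `K_{Φ(η)}(γ)` (value at `q = 1`). -/
def KNum (η : List ℕ) (γ : ℕ → ℤ) : ℕ :=
  Nat.card {m : ℕ × ℕ → ℕ //
    (∀ p, p ∉ Phi η → m p = 0) ∧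
    (∀ i ∈ Finset.range η.sum,
      (∑ j ∈ Finset.range η.sum, (m (i, j) : ℤ)) -
        (∑ j ∈ Finset.range η.sum, (m (j, i) : ℤ)) = γ i)}

/-- Coefficient of `q^d` in the parabolic Kostka polynomial
`K_{λμη}(q) = Σ_w (−1)^{ℓ(w)} K_{Φ(η)}(w(λ+δ) − μ − δ | q)`, where `δ = (n−1,…,1,0)`. -/
def ParKostkaCoeff (η : List ℕ) (lam mu : ℕ → ℤ) (d : ℕ) : ℤ :=
  ∑ w : Equiv.Perm (Fin η.sum),
    (Equiv.Perm.sign w : ℤ) *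
      (KCoeff η
        (fun i =>
          (if h : i < η.sum then
              lam ((w⁻¹ ⟨i, h⟩ : Fin η.sum) : ℕ) +
                ((η.sum : ℤ) - 1 - ((w⁻¹ ⟨i, h⟩ : Fin η.sum) : ℕ))
            else 0) - mu i - ((η.sum : ℤ) - 1 - i)) d : ℤ)

/-- The parabolic Kostka number `K_{λμη}(1)`. -/
def ParKostkaNum (η : List ℕ) (lam mu : ℕ → ℤ) : ℤ :=
  ∑ w : Equiv.Perm (Fin η.sum),
    (Equiv.Perm.sign w : ℤ) *
      (KNum η
        (fun i =>
          (if h : i < η.sum then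
              lam ((w⁻¹ ⟨i, h⟩ : Fin η.sum) : ℕ) +
                ((η.sum : ℤ) - 1 - ((w⁻¹ ⟨i, h⟩ : Fin η.sum) : ℕ))
            else 0) - mu i - ((η.sum : ℤ) - 1 - i)) : ℤ)

end

/-!
An array `m` counted by `K_{Φ(η₁ * η₂)}(γ₁ * γ₂ | q)` lives on pairs `i < j`, so it has no entries
below the diagonal blocks. Summing its net outflows over the first `n₁ = |η₁|` indices, the
entries inside that block cancel and what remains is the total mass of the off-diagonal block
`[0, n₁) × [n₁, n)`; as `γ₁` sums to zero, that block vanishes. Hence `m` is block diagonal, and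
its two diagonal blocks are exactly arrays counted by `K_{Φ(η₁)}(γ₁ | q)` and `K_{Φ(η₂)}(γ₂ | q)`,
whose sizes add up to the size of `m`.
-/

open Finset

theorem Nat.card_fiber_eq_sum_antidiagonal {X Y Z : Type*} {wX : X → ℕ} {wY : Y → ℕ}
    {wZ : Z → ℕ} (e : X ≃ Y × Z) (he : ∀ x, wX x = wY (e x).1 + wZ (e x).2)
    [∀ a, Finite {y // wY y = a}] [∀ b, Finite {z // wZ z = b}] (d : ℕ) :
    Nat.card {x // wX x = d} =
      ∑ ab ∈ antidiagonal d, Nat.card {y // wY y = ab.1} * Nat.card {z // wZ z = ab.2} := by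
  let split : {yz : Y × Z // wY yz.1 + wZ yz.2 = d} ≃
      Σ ab : antidiagonal d, {y // wY y = ab.1.1} × {z // wZ z = ab.1.2} :=
    { toFun := fun yz =>
        ⟨⟨(wY yz.1.1, wZ yz.1.2), mem_antidiagonal.mpr yz.2⟩, ⟨yz.1.1, rfl⟩, ⟨yz.1.2, rfl⟩⟩
      invFun := fun x => ⟨(x.2.1, x.2.2), by rw [x.2.1.2, x.2.2.2]; exact mem_antidiagonal.mp x.1.2⟩
      left_inv := fun _ => rfl
      right_inv := by
        rintro ⟨⟨⟨a, b⟩, h⟩, ⟨y, hy⟩, ⟨z, hz⟩⟩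
        dsimp only at hy hz
        subst hy hz
        rfl }
  rw [Nat.card_congr ((e.subtypeEquiv fun x => by rw [he]).trans split), Nat.card_sigma,
    ← sum_coe_sort (antidiagonal d)]
  simp only [Nat.card_prod]

lemma S_le_sum (η : List ℕ) (r : ℕ) : S η r ≤ η.sum :=
  (List.take_sublist r η).sum_le_sum fun _ _ => Nat.zero_le _

lemma S_append (η₁ η₂ : List ℕ) (r : ℕ) :
    S (η₁ ++ η₂) r = S η₁ r + S η₂ (r - η₁.length) := by
  simp [S, List.take_append]

def cuts (η : List ℕ) : Finset ℕ := (Icc 1 η.length).image (S η)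

lemma le_sum_of_mem_cuts {η : List ℕ} {c : ℕ} (h : c ∈ cuts η) : c ≤ η.sum := by
  obtain ⟨r, -, rfl⟩ := mem_image.mp h
  exact S_le_sum η r

lemma mem_cuts_append {η₁ η₂ : List ℕ} {c : ℕ} :
    c ∈ cuts (η₁ ++ η₂) ↔ c ∈ cuts η₁ ∨ ∃ c' ∈ cuts η₂, c = η₁.sum + c' := by
  simp only [cuts, mem_image, mem_Icc, List.length_append, S_append]
  constructor
  · rintro ⟨r, ⟨hr1, hr2⟩, rfl⟩
    rcases le_or_gt r η₁.length with hr | hr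
    · exact .inl ⟨r, ⟨hr1, hr⟩, by simp [Nat.sub_eq_zero_of_le hr, S]⟩
    · refine .inr ⟨_, ⟨r - η₁.length, ⟨by omega, by omega⟩, rfl⟩, ?_⟩
      simp [S, List.take_of_length_le hr.le]
  · rintro (⟨r, ⟨hr1, hr2⟩, rfl⟩ | ⟨_, ⟨s, ⟨hs1, hs2⟩, rfl⟩, rfl⟩)
    · exact ⟨r, ⟨hr1, by omega⟩, by simp [Nat.sub_eq_zero_of_le hr2, S]⟩
    · exact ⟨η₁.length + s, ⟨by omega, by omega⟩,
        by simp [S, List.take_of_length_le (Nat.le_add_right _ s)]⟩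

lemma mem_Phi_iff {η : List ℕ} {p : ℕ × ℕ} :
    p ∈ Phi η ↔ p.2 < η.sum ∧ ∃ c ∈ cuts η, p.1 < c ∧ c ≤ p.2 := by
  simp only [Phi, cuts, mem_filter, mem_product, mem_range, exists_mem_image]
  constructor
  · rintro ⟨⟨-, h⟩, hc⟩
    exact ⟨h, hc⟩
  · rintro ⟨h, r, hr, hlt, hle⟩
    exact ⟨⟨by omega, h⟩, r, hr, hlt, hle⟩

lemma Phi_lt {η : List ℕ} {p : ℕ × ℕ} (h : p ∈ Phi η) : p.1 < p.2 ∧ p.2 < η.sum := by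
  obtain ⟨h, c, -, hlt, hle⟩ := mem_Phi_iff.mp h
  exact ⟨by omega, h⟩

lemma mem_Phi_append_of_lt {η₁ η₂ : List ℕ} {p : ℕ × ℕ} (hp : p.2 < η₁.sum) :
    p ∈ Phi (η₁ ++ η₂) ↔ p ∈ Phi η₁ := by
  simp only [mem_Phi_iff, mem_cuts_append, List.sum_append]
  constructor
  · rintro ⟨-, c, (hc | ⟨c', -, rfl⟩), hlt, hle⟩
    · exact ⟨hp, c, hc, hlt, hle⟩
    · omega
  · rintro ⟨-, c, hc, hlt, hle⟩
    exact ⟨by omega, c, .inl hc, hlt, hle⟩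

lemma mem_Phi_append_add {η₁ η₂ : List ℕ} {i j : ℕ} :
    (η₁.sum + i, η₁.sum + j) ∈ Phi (η₁ ++ η₂) ↔ (i, j) ∈ Phi η₂ := by
  simp only [mem_Phi_iff, mem_cuts_append, List.sum_append]
  constructor
  · rintro ⟨hj, c, (hc | ⟨c', hc', rfl⟩), hlt, hle⟩
    · have := le_sum_of_mem_cuts hc
      omega
    · exact ⟨by omega, c', hc', by omega, by omega⟩
  · rintro ⟨hj, c', hc', hlt, hle⟩
    exact ⟨by omega, _, .inr ⟨c', hc', rfl⟩, by omega, by omega⟩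

def netFlow (n : ℕ) (m : ℕ × ℕ → ℕ) (i : ℕ) : ℤ :=
  ∑ j ∈ range n, (m (i, j) : ℤ) - ∑ j ∈ range n, (m (j, i) : ℤ)

def KostantPartitions (η : List ℕ) (γ : ℕ → ℤ) : Set (ℕ × ℕ → ℕ) :=
  {m | (∀ p, p ∉ Phi η → m p = 0) ∧ ∀ i ∈ range η.sum, netFlow η.sum m i = γ i}

lemma KCoeff_eq_card (η : List ℕ) (γ : ℕ → ℤ) (d : ℕ) :
    KCoeff η γ d = Nat.card {m : KostantPartitions η γ // ∑ p ∈ Phi η, m.1 p = d} :=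
  Nat.card_congr <| (Equiv.subtypeEquivRight fun _ => and_assoc.symm).trans
    (Equiv.subtypeSubtypeEquivSubtypeInter _ _).symm

instance (η : List ℕ) (γ : ℕ → ℤ) (d : ℕ) :
    Finite {m : KostantPartitions η γ // ∑ p ∈ Phi η, m.1 p = d} := by
  refine Finite.of_injective (fun m (p : Phi η) => (⟨m.1.1 p, ?_⟩ : Fin (d + 1))) ?_
  · have := single_le_sum (fun _ _ => Nat.zero_le _) p.2 (f := m.1.1)
    omega
  · intro m m' h
    ext p
    by_cases hp : p ∈ Phi η
    · exact congrArg Fin.val (congrFun h ⟨p, hp⟩)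
    · rw [m.1.2.1 p hp, m'.1.2.1 p hp]

lemma apply_eq_zero_of_mem_KostantPartitions {η : List ℕ} {γ : ℕ → ℤ} {m : ℕ × ℕ → ℕ}
    (hm : m ∈ KostantPartitions η γ) {p : ℕ × ℕ} (hp : ¬(p.1 < p.2 ∧ p.2 < η.sum)) :
    m p = 0 :=
  hm.1 p fun h => hp (Phi_lt h)

section Blocks

variable (n : ℕ)

def IsBlockDiagonal (m : ℕ × ℕ → ℕ) : Prop :=
  ∀ i j, i < n → n ≤ j → m (i, j) = 0 ∧ m (j, i) = 0

def topLeftBlock (m : ℕ × ℕ → ℕ) : ℕ × ℕ → ℕ :=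
  fun p => if p.1 < n ∧ p.2 < n then m p else 0

def bottomRightBlock (m : ℕ × ℕ → ℕ) : ℕ × ℕ → ℕ :=
  fun p => m (n + p.1, n + p.2)

def fromDiagBlocks (m₁ m₂ : ℕ × ℕ → ℕ) : ℕ × ℕ → ℕ :=
  fun p => if p.1 < n ∧ p.2 < n then m₁ p
    else if n ≤ p.1 ∧ n ≤ p.2 then m₂ (p.1 - n, p.2 - n) else 0

variable {n}

lemma isBlockDiagonal_fromDiagBlocks (m₁ m₂ : ℕ × ℕ → ℕ) :
    IsBlockDiagonal n (fromDiagBlocks n m₁ m₂) := by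
  intro i j hi hj
  simp only [fromDiagBlocks]
  constructor <;> rw [if_neg (by omega), if_neg (by omega)]

lemma fromDiagBlocks_topLeftBlock_bottomRightBlock {m : ℕ × ℕ → ℕ}
    (hm : IsBlockDiagonal n m) :
    fromDiagBlocks n (topLeftBlock n m) (bottomRightBlock n m) = m := by
  funext ⟨i, j⟩
  simp only [fromDiagBlocks, topLeftBlock, bottomRightBlock]
  split_ifs with h₁ h₂
  · rfl
  · rw [Nat.add_sub_cancel' h₂.1, Nat.add_sub_cancel' h₂.2]
  · rcases lt_or_ge i n with hi | hi
    · exact ((hm i j hi (by omega)).1).symm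
    · exact ((hm j i (by omega) hi).2).symm

lemma topLeftBlock_fromDiagBlocks {m₁ : ℕ × ℕ → ℕ}
    (h₁ : ∀ p : ℕ × ℕ, ¬(p.1 < n ∧ p.2 < n) → m₁ p = 0) (m₂ : ℕ × ℕ → ℕ) :
    topLeftBlock n (fromDiagBlocks n m₁ m₂) = m₁ := by
  funext p
  simp only [topLeftBlock, fromDiagBlocks]
  split_ifs with hp
  · rfl
  · exact (h₁ p hp).symm

lemma bottomRightBlock_fromDiagBlocks (m₁ m₂ : ℕ × ℕ → ℕ) :
    bottomRightBlock n (fromDiagBlocks n m₁ m₂) = m₂ := by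
  funext p
  simp [bottomRightBlock, fromDiagBlocks]

variable {m : ℕ × ℕ → ℕ}

lemma netFlow_add_of_lt (hm : IsBlockDiagonal n m) (k : ℕ) {i : ℕ} (hi : i < n) :
    netFlow (n + k) m i = netFlow n (topLeftBlock n m) i := by
  have hrow : ∀ j ∈ range k, (m (i, n + j) : ℤ) = 0 := fun j _ => by
    simp [(hm i (n + j) hi (Nat.le_add_right _ _)).1]
  have hcol : ∀ j ∈ range k, (m (n + j, i) : ℤ) = 0 := fun j _ => by
    simp [(hm i (n + j) hi (Nat.le_add_right _ _)).2]
  have htop : ∀ j ∈ range n, topLeftBlock n m (i, j) = m (i, j) ∧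
      topLeftBlock n m (j, i) = m (j, i) := fun j hj => by
    simp [topLeftBlock, hi, mem_range.mp hj]
  simp only [netFlow, sum_range_add, sum_eq_zero hrow, sum_eq_zero hcol, add_zero]
  rw [sum_congr rfl fun j hj => congrArg Nat.cast (htop j hj).1,
    sum_congr rfl fun j hj => congrArg Nat.cast (htop j hj).2]

lemma netFlow_add_add (hm : IsBlockDiagonal n m) (k i : ℕ) :
    netFlow (n + k) m (n + i) = netFlow k (bottomRightBlock n m) i := by
  have hrow : ∀ j ∈ range n, (m (n + i, j) : ℤ) = 0 := fun j hj => by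
    simp [(hm j (n + i) (mem_range.mp hj) (Nat.le_add_right _ _)).2]
  have hcol : ∀ j ∈ range n, (m (j, n + i) : ℤ) = 0 := fun j hj => by
    simp [(hm j (n + i) (mem_range.mp hj) (Nat.le_add_right _ _)).1]
  simp only [netFlow, sum_range_add, sum_eq_zero hrow, sum_eq_zero hcol, zero_add,
    bottomRightBlock]

lemma sum_netFlow_eq_sum_cross (hm : ∀ i j, i < n → n ≤ j → m (j, i) = 0) (k : ℕ) :
    ∑ i ∈ range n, netFlow (n + k) m i = ∑ i ∈ range n, ∑ j ∈ range k, (m (i, n + j) : ℤ) := by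
  have hcol : ∀ i ∈ range n, ∑ j ∈ range k, (m (n + j, i) : ℤ) = 0 := fun i hi =>
    sum_eq_zero fun j _ => by simp [hm i (n + j) (mem_range.mp hi) (Nat.le_add_right _ _)]
  simp only [netFlow, sum_range_add, sum_sub_distrib, sum_add_distrib, sum_congr rfl hcol,
    sum_const_zero, add_zero]
  rw [sum_comm (s := range n) (t := range n) (f := fun i j => (m (j, i) : ℤ))]
  ring

lemma sum_range_add_product (hm : IsBlockDiagonal n m) (k : ℕ) :
    ∑ p ∈ range (n + k) ×ˢ range (n + k), m p =
      ∑ p ∈ range n ×ˢ range n, topLeftBlock n m p +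
        ∑ p ∈ range k ×ˢ range k, bottomRightBlock n m p := by
  have hright : ∀ i ∈ range n, ∑ j ∈ range k, m (i, n + j) = 0 := fun i hi =>
    sum_eq_zero fun j _ => (hm i (n + j) (mem_range.mp hi) (Nat.le_add_right _ _)).1
  have hleft : ∀ i ∈ range k, ∑ j ∈ range n, m (n + i, j) = 0 := fun i _ =>
    sum_eq_zero fun j hj => (hm j (n + i) (mem_range.mp hj) (Nat.le_add_right _ _)).2
  have htop : ∀ i ∈ range n,
      ∑ j ∈ range n, topLeftBlock n m (i, j) = ∑ j ∈ range n, m (i, j) := fun i hi =>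
    sum_congr rfl fun j hj => if_pos ⟨mem_range.mp hi, mem_range.mp hj⟩
  simp only [sum_product, sum_range_add, sum_add_distrib, sum_congr rfl hright,
    sum_congr rfl hleft, sum_congr rfl htop, sum_const_zero, add_zero, zero_add,
    bottomRightBlock]

end Blocks

def concatVec (n : ℕ) (γ₁ γ₂ : ℕ → ℤ) : ℕ → ℤ :=
  fun i => if i < n then γ₁ i else γ₂ (i - n)

lemma sum_Phi_eq_sum_product {η : List ℕ} {m : ℕ × ℕ → ℕ} (hm : ∀ p, p ∉ Phi η → m p = 0) :
    ∑ p ∈ Phi η, m p = ∑ p ∈ range η.sum ×ˢ range η.sum, m p :=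
  sum_subset (fun p hp => by have := Phi_lt hp; simp only [mem_product, mem_range]; omega)
    fun p _ hp => hm p hp

section Append

variable {η₁ η₂ : List ℕ} {γ₁ γ₂ : ℕ → ℤ} {m : ℕ × ℕ → ℕ}

lemma support_Phi_append_iff (hm : IsBlockDiagonal η₁.sum m) :
    (∀ p, p ∉ Phi (η₁ ++ η₂) → m p = 0) ↔
      (∀ p, p ∉ Phi η₁ → topLeftBlock η₁.sum m p = 0) ∧
        ∀ p, p ∉ Phi η₂ → bottomRightBlock η₁.sum m p = 0 := by
  constructor
  · refine fun h => ⟨fun p hp => ?_, fun p hp => h _ (mem_Phi_append_add.not.mpr hp)⟩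
    simp only [topLeftBlock]
    split_ifs with hbox
    · exact h p ((mem_Phi_append_of_lt hbox.2).not.mpr hp)
    · rfl
  · rintro ⟨h₁, h₂⟩ ⟨i, j⟩ hp
    rcases lt_or_ge i η₁.sum with hi | hi <;> rcases lt_or_ge j η₁.sum with hj | hj
    · simpa [topLeftBlock, hi, hj] using h₁ (i, j) ((mem_Phi_append_of_lt hj).not.mp hp)
    · exact (hm i j hi hj).1
    · exact (hm j i hj hi).2
    · obtain ⟨a, rfl⟩ := Nat.exists_eq_add_of_le hi
      obtain ⟨b, rfl⟩ := Nat.exists_eq_add_of_le hj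
      exact h₂ (a, b) (mem_Phi_append_add.not.mp hp)

lemma netFlow_append_iff (hm : IsBlockDiagonal η₁.sum m) :
    (∀ i ∈ range (η₁ ++ η₂).sum, netFlow (η₁ ++ η₂).sum m i = concatVec η₁.sum γ₁ γ₂ i) ↔
      (∀ i ∈ range η₁.sum, netFlow η₁.sum (topLeftBlock η₁.sum m) i = γ₁ i) ∧
        ∀ i ∈ range η₂.sum, netFlow η₂.sum (bottomRightBlock η₁.sum m) i = γ₂ i := by
  simp only [List.sum_append, mem_range]
  constructor
  · refine fun h => ⟨fun i hi => ?_, fun i hi => ?_⟩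
    · rw [← netFlow_add_of_lt hm η₂.sum hi, h i (by omega), concatVec, if_pos hi]
    · rw [← netFlow_add_add hm, h _ (by omega), concatVec, if_neg (by omega),
        Nat.add_sub_cancel_left]
  · rintro ⟨h₁, h₂⟩ i hi
    rcases lt_or_ge i η₁.sum with hi₁ | hi₁
    · rw [netFlow_add_of_lt hm η₂.sum hi₁, h₁ i hi₁, concatVec, if_pos hi₁]
    · obtain ⟨k, rfl⟩ := Nat.exists_eq_add_of_le hi₁
      rw [netFlow_add_add hm, h₂ k (by omega), concatVec, if_neg (by omega),
        Nat.add_sub_cancel_left]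

lemma mem_KostantPartitions_append_iff (hm : IsBlockDiagonal η₁.sum m) :
    m ∈ KostantPartitions (η₁ ++ η₂) (concatVec η₁.sum γ₁ γ₂) ↔
      topLeftBlock η₁.sum m ∈ KostantPartitions η₁ γ₁ ∧
        bottomRightBlock η₁.sum m ∈ KostantPartitions η₂ γ₂ := by
  simp only [KostantPartitions, Set.mem_ofPred_eq, support_Phi_append_iff hm,
    netFlow_append_iff hm]
  tauto

lemma isBlockDiagonal_of_mem (h₁ : ∑ i ∈ range η₁.sum, γ₁ i = 0)
    (hm : m ∈ KostantPartitions (η₁ ++ η₂) (concatVec η₁.sum γ₁ γ₂)) :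
    IsBlockDiagonal η₁.sum m := by
  have hlow : ∀ i j, i < η₁.sum → η₁.sum ≤ j → m (j, i) = 0 := fun i j hi hj =>
    apply_eq_zero_of_mem_KostantPartitions hm (by omega)
  have hflow : ∀ i ∈ range η₁.sum, netFlow (η₁.sum + η₂.sum) m i = γ₁ i := fun i hi => by
    have hi := mem_range.mp hi
    have := hm.2 i (by simp only [mem_range, List.sum_append]; omega)
    rwa [List.sum_append, concatVec, if_pos hi] at this
  have hcross := sum_netFlow_eq_sum_cross hlow η₂.sum
  rw [sum_congr rfl hflow, h₁] at hcross
  replace hcross : ∑ i ∈ range η₁.sum, ∑ j ∈ range η₂.sum, m (i, η₁.sum + j) = 0 := by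
    exact_mod_cast hcross.symm
  intro i j hi hj
  refine ⟨?_, hlow i j hi hj⟩
  obtain ⟨k, rfl⟩ := Nat.exists_eq_add_of_le hj
  by_cases hk : k < η₂.sum
  · exact sum_eq_zero_iff.mp (sum_eq_zero_iff.mp hcross i (mem_range.mpr hi)) k
      (mem_range.mpr hk)
  · exact apply_eq_zero_of_mem_KostantPartitions hm (by simp only [List.sum_append]; omega)

lemma sum_Phi_append (hb : IsBlockDiagonal η₁.sum m)
    (hm : m ∈ KostantPartitions (η₁ ++ η₂) (concatVec η₁.sum γ₁ γ₂)) :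
    ∑ p ∈ Phi (η₁ ++ η₂), m p =
      ∑ p ∈ Phi η₁, topLeftBlock η₁.sum m p + ∑ p ∈ Phi η₂, bottomRightBlock η₁.sum m p := by
  obtain ⟨h₁, h₂⟩ := (mem_KostantPartitions_append_iff hb).mp hm
  rw [sum_Phi_eq_sum_product hm.1, sum_Phi_eq_sum_product h₁.1, sum_Phi_eq_sum_product h₂.1,
    List.sum_append, sum_range_add_product hb]

lemma topLeftBlock_fromDiagBlocks_of_mem {m₁ : ℕ × ℕ → ℕ}
    (hm₁ : m₁ ∈ KostantPartitions η₁ γ₁) (m₂ : ℕ × ℕ → ℕ) :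
    topLeftBlock η₁.sum (fromDiagBlocks η₁.sum m₁ m₂) = m₁ :=
  topLeftBlock_fromDiagBlocks (fun _ _ => apply_eq_zero_of_mem_KostantPartitions hm₁ (by omega)) m₂

def kostantPartitionsAppendEquiv (h₁ : ∑ i ∈ range η₁.sum, γ₁ i = 0) :
    KostantPartitions (η₁ ++ η₂) (concatVec η₁.sum γ₁ γ₂) ≃
      KostantPartitions η₁ γ₁ × KostantPartitions η₂ γ₂ where
  toFun m :=
    have h := (mem_KostantPartitions_append_iff (isBlockDiagonal_of_mem h₁ m.2)).mp m.2
    (⟨_, h.1⟩, ⟨_, h.2⟩)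
  invFun m := ⟨fromDiagBlocks η₁.sum m.1 m.2, by
    rw [mem_KostantPartitions_append_iff (isBlockDiagonal_fromDiagBlocks _ _),
      topLeftBlock_fromDiagBlocks_of_mem m.1.2, bottomRightBlock_fromDiagBlocks]
    exact ⟨m.1.2, m.2.2⟩⟩
  left_inv m := Subtype.ext <|
    fromDiagBlocks_topLeftBlock_bottomRightBlock (isBlockDiagonal_of_mem h₁ m.2)
  right_inv m := Prod.ext
    (Subtype.ext <| topLeftBlock_fromDiagBlocks_of_mem m.1.2 _)
    (Subtype.ext <| bottomRightBlock_fromDiagBlocks _ _)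

end Append

theorem stmt2_general (η₁ η₂ : List ℕ) (γ₁ γ₂ : ℕ → ℤ)
    (h₁ : ∑ i ∈ Finset.range η₁.sum, γ₁ i = 0) (d : ℕ) :
    KCoeff (η₁ ++ η₂) (fun i => if i < η₁.sum then γ₁ i else γ₂ (i - η₁.sum)) d =
      ∑ a ∈ Finset.range (d + 1), KCoeff η₁ γ₁ a * KCoeff η₂ γ₂ (d - a) := by
  change KCoeff (η₁ ++ η₂) (concatVec η₁.sum γ₁ γ₂) d = _
  simp only [KCoeff_eq_card]
  rw [Nat.card_fiber_eq_sum_antidiagonal (kostantPartitionsAppendEquiv h₁)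
      (wY := fun m => ∑ p ∈ Phi η₁, m.1 p) (wZ := fun m => ∑ p ∈ Phi η₂, m.1 p)
      (fun m => sum_Phi_append (isBlockDiagonal_of_mem h₁ m.2) m.2),
    Nat.sum_antidiagonal_eq_sum_range_succ
      (fun a b => Nat.card {m : KostantPartitions η₁ γ₁ // ∑ p ∈ Phi η₁, m.1 p = a} *
        Nat.card {m : KostantPartitions η₂ γ₂ // ∑ p ∈ Phi η₂, m.1 p = b})]

/-- Multiplicativity of the parabolic `q`-Kostant partition function under
concatenation: `K_{Φ(η₁*η₂)}(γ₁*γ₂|q) = K_{Φ(η₁)}(γ₁|q) · K_{Φ(η₂)}(γ₂|q)`,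
stated coefficient-wise in `q`. -/
theorem stmt2 (η₁ η₂ : List ℕ) (γ₁ γ₂ : ℕ → ℤ)
    (h₁ : ∑ i ∈ Finset.range η₁.sum, γ₁ i = 0)
    (h₂ : ∑ i ∈ Finset.range η₂.sum, γ₂ i = 0) (d : ℕ) :
    KCoeff (η₁ ++ η₂) (fun i => if i < η₁.sum then γ₁ i else γ₂ (i - η₁.sum)) d =
      ∑ a ∈ Finset.range (d + 1), KCoeff η₁ γ₁ a * KCoeff η₂ γ₂ (d - a) :=
  stmt2_general η₁ η₂ γ₁ γ₂ h₁ d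
end

section
/- Let η be a composition of size n and γ ∈ ℤ^n with Σγ_i = 0. Then K_{Φ(η)}(γ | q) = K_{Φ(η⃖)}(−γ⃖ | q), where η⃖ and γ⃖ denote the reversed sequences. -/
open scoped Classical

/-!
Reflecting the `n × n` grid in its anti-diagonal, `(i, j) ↦ (n - 1 - j, n - 1 - i)`, reverses the
order of the indices and swaps rows with columns. It carries the blocks of `η` to those of
`η⃖`, hence `Φ(η)` onto `Φ(η⃖)`, so transporting arrays along it is a bijection between the
arrays counted by the two sides: it keeps the total of the entries and turns the net row sum at
`i` into minus the net row sum at `n - 1 - i`.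
-/

open Finset

def kostantArrays (η : List ℕ) (γ : ℕ → ℤ) (d : ℕ) : Set (ℕ × ℕ → ℕ) :=
  {m | (∀ p, p ∉ Phi η → m p = 0) ∧
    (∀ i ∈ range η.sum,
      (∑ j ∈ range η.sum, (m (i, j) : ℤ)) - (∑ j ∈ range η.sum, (m (j, i) : ℤ)) = γ i) ∧
    (∑ p ∈ Phi η, m p) = d}

lemma KCoeff_eq_card_kostantArrays (η : List ℕ) (γ : ℕ → ℤ) (d : ℕ) :
    KCoeff η γ d = Nat.card (kostantArrays η γ d) := rfl

def antiTranspose (n : ℕ) (p : ℕ × ℕ) : ℕ × ℕ := (n - 1 - p.2, n - 1 - p.1)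

lemma antiTranspose_antiTranspose {n : ℕ} {p : ℕ × ℕ} (h₁ : p.1 < n) (h₂ : p.2 < n) :
    antiTranspose n (antiTranspose n p) = p := by
  ext <;> simp only [antiTranspose] <;> omega

lemma S_reverse_add (η : List ℕ) (r : ℕ) : S η.reverse r + S η (η.length - r) = η.sum := by
  rw [S, S, List.take_reverse, List.sum_reverse, add_comm, List.sum_take_add_sum_drop]

lemma lt_of_mem_Phi {η : List ℕ} {p : ℕ × ℕ} (hp : p ∈ Phi η) : p.1 < η.sum ∧ p.2 < η.sum := by
  simp only [Phi, mem_filter, mem_product, mem_range] at hp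
  exact hp.1

lemma antiTranspose_mem_Phi_reverse {η : List ℕ} {p : ℕ × ℕ} (hp : p ∈ Phi η) :
    antiTranspose η.sum p ∈ Phi η.reverse := by
  simp only [Phi, mem_filter, mem_product, mem_range, mem_Icc, List.sum_reverse,
    List.length_reverse, antiTranspose] at hp ⊢
  obtain ⟨⟨hi_lt, hj_lt⟩, r, ⟨hr₁, hr₂⟩, hi, hj⟩ := hp
  -- `S η r ≤ p.2 < η.sum = S η η.length`: the boundary `r` is not the last one.
  have hr : r < η.length := by
    refine hr₂.lt_of_ne fun h => ?_
    rw [h, S, List.take_length] at hj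
    omega
  have hS := S_reverse_add η (η.length - r)
  rw [Nat.sub_sub_self hr₂] at hS
  exact ⟨⟨by omega, by omega⟩, η.length - r, ⟨by omega, by omega⟩, by omega, by omega⟩

lemma antiTranspose_mem_Phi {η : List ℕ} {p : ℕ × ℕ} (hp : p ∈ Phi η.reverse) :
    antiTranspose η.sum p ∈ Phi η := by
  simpa only [List.reverse_reverse, List.sum_reverse] using antiTranspose_mem_Phi_reverse hp

-- The guard matters: with truncated subtraction `antiTranspose n` sends points off the grid
-- back onto it, and the transport would not be an involution.
def antiTransposeArray (n : ℕ) (m : ℕ × ℕ → ℕ) (p : ℕ × ℕ) : ℕ :=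
  if p.1 < n ∧ p.2 < n then m (antiTranspose n p) else 0

section antiTransposeArray

variable {η : List ℕ} {m : ℕ × ℕ → ℕ}

lemma antiTransposeArray_antiTransposeArray (hm : ∀ p, p ∉ Phi η → m p = 0) :
    antiTransposeArray η.sum (antiTransposeArray η.sum m) = m := by
  funext p
  by_cases hp : p.1 < η.sum ∧ p.2 < η.sum
  · have hp' : (antiTranspose η.sum p).1 < η.sum ∧ (antiTranspose η.sum p).2 < η.sum := by
      simp only [antiTranspose]; omega
    simp only [antiTransposeArray, if_pos hp, if_pos hp', antiTranspose_antiTranspose hp.1 hp.2]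
  · rw [antiTransposeArray, if_neg hp, hm p fun h => hp (lt_of_mem_Phi h)]

lemma antiTransposeArray_eq_zero (hm : ∀ p, p ∉ Phi η → m p = 0) (p : ℕ × ℕ)
    (hp : p ∉ Phi η.reverse) : antiTransposeArray η.sum m p = 0 := by
  unfold antiTransposeArray
  split_ifs with hbox
  · refine hm _ fun h => hp ?_
    simpa only [antiTranspose_antiTranspose hbox.1 hbox.2] using antiTranspose_mem_Phi_reverse h
  · rfl

lemma sum_Phi_reverse_antiTransposeArray :
    ∑ p ∈ Phi η.reverse, antiTransposeArray η.sum m p = ∑ p ∈ Phi η, m p := by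
  refine sum_nbij' (antiTranspose η.sum) (antiTranspose η.sum) (fun _ => antiTranspose_mem_Phi)
    (fun _ => antiTranspose_mem_Phi_reverse) (fun p hp => ?_) (fun p hp => ?_) (fun p hp => ?_)
  · have h := lt_of_mem_Phi hp
    rw [List.sum_reverse] at h
    exact antiTranspose_antiTranspose h.1 h.2
  · exact antiTranspose_antiTranspose (lt_of_mem_Phi hp).1 (lt_of_mem_Phi hp).2
  · have h := lt_of_mem_Phi hp
    rw [List.sum_reverse] at h
    rw [antiTransposeArray, if_pos h]

end antiTransposeArray

section rowSums

variable {n i : ℕ} (m : ℕ × ℕ → ℕ)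

lemma sum_antiTransposeArray_row (hi : i < n) :
    ∑ j ∈ range n, (antiTransposeArray n m (i, j) : ℤ) = ∑ j ∈ range n, (m (j, n - 1 - i) : ℤ) := by
  rw [← sum_range_reflect]
  refine sum_congr rfl fun j hj => ?_
  have hj := mem_range.1 hj
  rw [antiTransposeArray, if_pos ⟨hi, by omega⟩, antiTranspose, Nat.sub_sub_self (by omega)]

lemma sum_antiTransposeArray_col (hi : i < n) :
    ∑ j ∈ range n, (antiTransposeArray n m (j, i) : ℤ) = ∑ j ∈ range n, (m (n - 1 - i, j) : ℤ) := by
  rw [← sum_range_reflect]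
  refine sum_congr rfl fun j hj => ?_
  have hj := mem_range.1 hj
  rw [antiTransposeArray, if_pos ⟨by omega, hi⟩, antiTranspose, Nat.sub_sub_self (by omega)]

end rowSums

lemma mapsTo_antiTransposeArray_kostantArrays {η : List ℕ} {γ γ' : ℕ → ℤ} {d : ℕ}
    (hγ : ∀ i < η.sum, γ' i = -γ (η.sum - 1 - i)) :
    Set.MapsTo (antiTransposeArray η.sum) (kostantArrays η γ d) (kostantArrays η.reverse γ' d) := by
  rintro m ⟨hsupp, hrow, htotal⟩
  refine ⟨antiTransposeArray_eq_zero hsupp, fun i hi => ?_,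
    sum_Phi_reverse_antiTransposeArray.trans htotal⟩
  rw [List.sum_reverse, mem_range] at hi
  rw [List.sum_reverse, sum_antiTransposeArray_row m hi, sum_antiTransposeArray_col m hi, hγ i hi,
    ← hrow _ (mem_range.2 (by omega)), neg_sub]

theorem stmt3_general (η : List ℕ) (γ : ℕ → ℤ) (d : ℕ) :
    KCoeff η γ d = KCoeff η.reverse (fun i => - γ (η.sum - 1 - i)) d := by
  have hforth := mapsTo_antiTransposeArray_kostantArrays (η := η) (γ := γ) (d := d)
    (fun _ _ => rfl)
  have hback : Set.MapsTo (antiTransposeArray η.sum)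
      (kostantArrays η.reverse (fun i => - γ (η.sum - 1 - i)) d) (kostantArrays η γ d) := by
    simpa only [List.reverse_reverse, List.sum_reverse] using
      mapsTo_antiTransposeArray_kostantArrays (η := η.reverse) (d := d) (γ' := γ) fun i hi => by
        rw [List.sum_reverse] at hi ⊢
        rw [Nat.sub_sub_self (by omega), neg_neg]
  have hinv : Set.InvOn (antiTransposeArray η.sum) (antiTransposeArray η.sum)
      (kostantArrays η γ d) (kostantArrays η.reverse (fun i => - γ (η.sum - 1 - i)) d) :=
    ⟨fun m hm => antiTransposeArray_antiTransposeArray hm.1, fun m hm => by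
      simpa only [List.sum_reverse, List.reverse_reverse] using
        antiTransposeArray_antiTransposeArray (η := η.reverse) hm.1⟩
  rw [KCoeff_eq_card_kostantArrays, KCoeff_eq_card_kostantArrays]
  exact Nat.card_congr ((hinv.bijOn hforth hback).equiv _)

/-- `K_{Φ(η)}(γ|q) = K_{Φ(η⃖)}(−γ⃖|q)`, where `η⃖`, `γ⃖` are the reversed
sequences; stated coefficient-wise in `q`. -/
theorem stmt3 (η : List ℕ) (γ : ℕ → ℤ)
    (h : ∑ i ∈ Finset.range η.sum, γ i = 0) (d : ℕ) :
    KCoeff η γ d = KCoeff η.reverse (fun i => - γ (η.sum - 1 - i)) d :=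
  stmt3_general η γ d
end

section
/- If γ = (γ_1, γ_2, γ_3, γ_4) ∈ ℤ⁴ with Σγ_i = 0, γ_1 ≥ 0, γ_2 ≥ 0, γ_3 ≥ 0, then the Kostant partition function for sl_4 equals K_{Φ(1⁴)}(γ) = C(γ_1+3, 3) + γ_2 · C(γ_1+2, 2), where C(n,k) denotes the binomial coefficient. -/
open scoped Classical

noncomputable section

/-!
An array on the positive roots of `sl₄` with net row sums `γ = (a, b, c, -(a+b+c))` is
determined by its entries `k = m₀₁`, `x = m₀₂`, `y = m₁₂`: the row equations give
`m₀₃ = a - k - x`, `m₁₃ = b + k - y`, `m₂₃ = c + x + y`, and these are non-negative exactly when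
`k + x ≤ a` and `y ≤ b + k`. For fixed `k` there are `(a + 1 - k) (b + k + 1)` such pairs `(x, y)`,
and summing over `k ≤ a` gives `C(a+3, 3) + b C(a+2, 2)`.
-/

open Finset

lemma S_replicate_one (n r : ℕ) : S (List.replicate n 1) r = min r n := by
  simp [S, List.take_replicate]

lemma mem_Phi_replicate_one {n : ℕ} {p : ℕ × ℕ} :
    p ∈ Phi (List.replicate n 1) ↔ p.1 < p.2 ∧ p.2 < n := by
  simp only [Phi, mem_filter, mem_product, mem_range, mem_Icc, S_replicate_one,
    List.sum_replicate, smul_eq_mul, mul_one, List.length_replicate]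
  constructor
  · rintro ⟨⟨-, h₂⟩, r, -, hr₁, hr₂⟩
    exact ⟨by omega, h₂⟩
  · rintro ⟨h₁, h₂⟩
    exact ⟨⟨by omega, h₂⟩, p.1 + 1, ⟨by omega, by omega⟩, by omega, by omega⟩

lemma mem_Phi_one_four {p : ℕ × ℕ} : p ∈ Phi [1, 1, 1, 1] ↔ p.1 < p.2 ∧ p.2 < 4 :=
  mem_Phi_replicate_one (n := 4)

def netRowSum (n : ℕ) (m : ℕ × ℕ → ℕ) (i : ℕ) : ℤ :=
  (∑ j ∈ range n, (m (i, j) : ℤ)) - ∑ j ∈ range n, (m (j, i) : ℤ)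

/-- The fourth row equation is the negated sum of the other three. -/
lemma netRowSum_four_iff {m : ℕ × ℕ → ℕ} (hm : ∀ i j, j ≤ i → m (i, j) = 0)
    {γ : ℕ → ℤ} {a b c : ℕ} (ha : γ 0 = a) (hb : γ 1 = b) (hc : γ 2 = c)
    (hd : γ 3 = -(a + b + c)) :
    (∀ i ∈ range 4, netRowSum 4 m i = γ i) ↔
      m (0, 1) + m (0, 2) + m (0, 3) = a ∧ m (1, 2) + m (1, 3) = b + m (0, 1) ∧
        m (2, 3) = c + m (0, 2) + m (1, 2) := by
  have row : ∀ i, netRowSum 4 m i = (m (i, 0) + m (i, 1) + m (i, 2) + m (i, 3) : ℤ) -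
      (m (0, i) + m (1, i) + m (2, i) + m (3, i)) := by
    intro i
    simp only [netRowSum, sum_range_succ, sum_range_zero, zero_add]
  simp only [mem_range, row]
  constructor
  · intro h
    have h₀ := h 0 (by norm_num)
    have h₁ := h 1 (by norm_num)
    have h₂ := h 2 (by norm_num)
    simp (disch := decide) only [hm, ha, hb, hc, Nat.cast_zero] at h₀ h₁ h₂
    omega
  · rintro ⟨h₀, h₁, h₂⟩ i hi
    interval_cases i <;> simp (disch := decide) only [hm, ha, hb, hc, hd, Nat.cast_zero] <;> omega

def sl4Triples (a b : ℕ) : Finset (Σ _ : ℕ, ℕ × ℕ) :=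
  (range (a + 1)).sigma fun k => range (a + 1 - k) ×ˢ range (b + k + 1)

lemma mem_sl4Triples {a b : ℕ} {t : Σ _ : ℕ, ℕ × ℕ} :
    t ∈ sl4Triples a b ↔ t.1 + t.2.1 ≤ a ∧ t.2.2 ≤ b + t.1 := by
  simp only [sl4Triples, mem_sigma, mem_product, mem_range]
  omega

lemma sum_range_add_add_one (n b : ℕ) :
    ∑ k ∈ range n, (b + k + 1) = n * (b + 1) + n.choose 2 := by
  induction n with
  | zero => simp
  | succ n ih =>
    rw [sum_range_succ, ih, Nat.choose_succ_succ n 1, Nat.choose_one_right]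
    ring

lemma sum_range_mul_eq_choose (a b : ℕ) :
    ∑ k ∈ range (a + 1), (a + 1 - k) * (b + k + 1) = (a + 3).choose 3 + b * (a + 2).choose 2 := by
  induction a with
  | zero => simp [add_comm]
  | succ a ih =>
    have peel : ∑ k ∈ range (a + 2), (a + 2 - k) * (b + k + 1)
        = ∑ k ∈ range (a + 2), ((a + 1 - k) * (b + k + 1) + (b + k + 1)) := by
      refine sum_congr rfl fun k hk => ?_
      rw [show a + 2 - k = a + 1 - k + 1 by rw [mem_range] at hk; omega]
      ring
    rw [peel, sum_add_distrib, sum_range_add_add_one, sum_range_succ, Nat.sub_self, zero_mul,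
      add_zero, ih, Nat.choose_succ_succ (a + 3) 2, Nat.choose_succ_succ (a + 2) 1,
      Nat.choose_succ_succ (a + 1) 1, Nat.choose_one_right, Nat.choose_one_right]
    ring

lemma card_sl4Triples (a b : ℕ) :
    (sl4Triples a b).card = (a + 3).choose 3 + b * (a + 2).choose 2 := by
  simp only [sl4Triples, card_sigma, card_product, card_range]
  exact sum_range_mul_eq_choose a b

lemma eq_zero_of_not_mem_Phi_one_four {m : ℕ × ℕ → ℕ} (hm : ∀ p ∉ Phi [1, 1, 1, 1], m p = 0)
    {i j : ℕ} (hji : j ≤ i) : m (i, j) = 0 :=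
  hm _ <| by rw [mem_Phi_one_four]; omega

def sl4Array (a b c k x y : ℕ) : ℕ × ℕ → ℕ := fun p =>
  if p = (0, 1) then k else if p = (0, 2) then x else if p = (0, 3) then a - k - x
  else if p = (1, 2) then y else if p = (1, 3) then b + k - y
  else if p = (2, 3) then c + x + y else 0

lemma sl4Array_apply_of_not_lt {a b c k x y i j : ℕ} (h : ¬(i < j ∧ j < 4)) :
    sl4Array a b c k x y (i, j) = 0 := by
  simp only [sl4Array, Prod.mk.injEq]
  split_ifs <;> omega

lemma sl4Array_rows {a b c k x y : ℕ} (hkx : k + x ≤ a) (hy : y ≤ b + k) :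
    let m := sl4Array a b c k x y
    m (0, 1) + m (0, 2) + m (0, 3) = a ∧ m (1, 2) + m (1, 3) = b + m (0, 1) ∧
      m (2, 3) = c + m (0, 2) + m (1, 2) := by
  simp [sl4Array]
  omega

lemma sl4Array_free_entries_eq {m : ℕ × ℕ → ℕ} (hm : ∀ p ∉ Phi [1, 1, 1, 1], m p = 0)
    {a b c : ℕ}
    (h₀ : m (0, 1) + m (0, 2) + m (0, 3) = a) (h₁ : m (1, 2) + m (1, 3) = b + m (0, 1))
    (h₂ : m (2, 3) = c + m (0, 2) + m (1, 2)) :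
    sl4Array a b c (m (0, 1)) (m (0, 2)) (m (1, 2)) = m := by
  funext ⟨i, j⟩
  by_cases hij : i < j ∧ j < 4
  · obtain ⟨hij, hj⟩ := hij
    interval_cases j <;> interval_cases i <;> simp [sl4Array] <;> omega
  · rw [sl4Array_apply_of_not_lt hij, hm]
    rwa [mem_Phi_one_four]

lemma KNum_one_four_eq_card {γ : ℕ → ℤ} {a b c : ℕ} (ha : γ 0 = a) (hb : γ 1 = b)
    (hc : γ 2 = c) (hd : γ 3 = -(a + b + c)) :
    KNum [1, 1, 1, 1] γ = (sl4Triples a b).card := by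
  have rows := fun m hm ↦ netRowSum_four_iff (m := m)
    (fun _ _ ↦ eq_zero_of_not_mem_Phi_one_four hm) ha hb hc hd
  rw [KNum, ← Nat.card_eq_finsetCard]
  refine Nat.card_congr
    { toFun := fun m ↦ ⟨⟨m.1 (0, 1), m.1 (0, 2), m.1 (1, 2)⟩, ?_⟩
      invFun := fun t ↦ ⟨sl4Array a b c t.1.1 t.1.2.1 t.1.2.2, ?_, ?_⟩
      left_inv := ?_
      right_inv := ?_ }
  · obtain ⟨m, hm, hrows⟩ := m
    obtain ⟨h₀, h₁, -⟩ := (rows m hm).1 hrows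
    rw [mem_sl4Triples]
    dsimp only
    omega
  · exact fun p hp ↦ sl4Array_apply_of_not_lt (by rwa [mem_Phi_one_four] at hp)
  · obtain ⟨⟨k, x, y⟩, ht⟩ := t
    rw [mem_sl4Triples] at ht
    exact (rows _ fun p hp ↦ sl4Array_apply_of_not_lt (by rwa [mem_Phi_one_four] at hp)).2
      (sl4Array_rows ht.1 ht.2)
  · rintro ⟨m, hm, hrows⟩
    obtain ⟨h₀, h₁, h₂⟩ := (rows m hm).1 hrows
    exact Subtype.ext (sl4Array_free_entries_eq hm h₀ h₁ h₂)
  · rintro ⟨⟨k, x, y⟩, ht⟩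
    simp [sl4Array]

/-- For `γ ∈ ℤ⁴` with `Σγ_i = 0` and `γ_1, γ_2, γ_3 ≥ 0`, the Kostant
partition function for `sl₄` equals `K_{Φ(1⁴)}(γ) = C(γ_1+3,3) + γ_2·C(γ_1+2,2)`. -/
theorem stmt6 (γ : ℕ → ℤ) (h0 : γ 0 + γ 1 + γ 2 + γ 3 = 0)
    (h1 : 0 ≤ γ 0) (h2 : 0 ≤ γ 1) (h3 : 0 ≤ γ 2) :
    KNum [1, 1, 1, 1] γ =
      Nat.choose ((γ 0).toNat + 3) 3 + (γ 1).toNat * Nat.choose ((γ 0).toNat + 2) 2 := by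
  rw [KNum_one_four_eq_card (c := (γ 2).toNat) (Int.toNat_of_nonneg h1).symm
    (Int.toNat_of_nonneg h2).symm (Int.toNat_of_nonneg h3).symm (by omega), card_sl4Triples]
end
end
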